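/- arXiv:1301.4623 — 2 statements merged into one kernel-verified Lean document; each statement's English description precedes it below -/
import Mathlib

section
/- Let G be a connected graph with κ̄₃(G) = 1 that has no cut edge. Then G is a cycle. -/
open SimpleGraph

/-- An `S`-Steiner tree in `G`: a subgraph that is a tree and contains `S`. -/
def SimpleGraph.IsSteinerTree {V : Type*} (G : SimpleGraph V) (S : Set V)
    (T : G.Subgraph) : Prop :=
  S ⊆ T.verts ∧ T.coe.IsTree

/-- `κ(S)`: the maximum number of pairwise internally disjoint `S`-Steiner trees in `G`. -/
noncomputable def SimpleGraph.steinerConn {V : Type*} (G : SimpleGraph V) (S : Set V) : ℕ :=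
  sSup {n : ℕ | ∃ f : Fin n → G.Subgraph,
    (∀ i, G.IsSteinerTree S (f i)) ∧
    ∀ i j, i ≠ j →
      (f i).edgeSet ∩ (f j).edgeSet = ∅ ∧ (f i).verts ∩ (f j).verts = S}

/-- `κ̄ₖ(G) = max {κ(S) : S ⊆ V(G), |S| = k}`, the maximal generalized local connectivity. -/
noncomputable def SimpleGraph.kappaBar {V : Type*} (G : SimpleGraph V) (k : ℕ) : ℕ :=
  sSup {m : ℕ | ∃ S : Finset V, S.card = k ∧ G.steinerConn ↑S = m}

/-- `p` is an ear of the cycle `c` in `G`: a nontrivial path (whose two endpoints may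
coincide) meeting `c` exactly in its endpoints. -/
def SimpleGraph.IsEar {V : Type*} (G : SimpleGraph V) {x u v : V}
    (c : G.Walk x x) (p : G.Walk u v) : Prop :=
  0 < p.length ∧ u ∈ c.support ∧ v ∈ c.support ∧
  p.support.tail.Nodup ∧ (u = v ∨ u ∉ p.support.tail) ∧
  ∀ w ∈ p.support, w ∈ c.support → w = u ∨ w = v

/-!
Take a cycle `C` through some edge, which exists because no edge is a bridge. If a vertex `v`
of `C` had an edge `vx` off `C`, a walk from `x` back to `v` avoiding `vx` first meets `C` at
some `w`. For `w ≠ v` this closes up a theta graph, for `w = v` a second cycle meeting `C` only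
in `v`; either way some three vertices are joined by two internally disjoint Steiner paths, so
`κ̄₃(G) ≥ 2`. Hence every edge at a vertex of `C` lies on `C`, and connectivity gives `G = C`.
-/

namespace SimpleGraph

open Walk

variable {V : Type*} {G : SimpleGraph V}

theorem Walk.IsPath.isAcyclic_spanningCoe_toSubgraph {u v : V} {p : G.Walk u v}
    (hp : p.IsPath) : p.toSubgraph.spanningCoe.IsAcyclic := by
  induction p with
  | nil =>
    convert isAcyclic_bot
    ext; simp
  | cons h q ih =>
    rw [cons_isPath_iff] at hp
    simp only [Walk.toSubgraph]
    rw [Subgraph.sup_spanningCoe, Subgraph.spanningCoe_subgraphOfAdj, sup_comm]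
    refine (ih hp.1).sup_edge_of_not_reachable fun ⟨r⟩ => hp.2 ?_
    cases r with
    | nil => exact absurd rfl h.ne
    | cons h' _ => exact q.mem_verts_toSubgraph.mp h'.fst_mem

theorem Walk.IsPath.isTree_coe_toSubgraph {u v : V} {p : G.Walk u v} (hp : p.IsPath) :
    p.toSubgraph.coe.IsTree :=
  ⟨p.toSubgraph_connected,
    hp.isAcyclic_spanningCoe_toSubgraph.embedding p.toSubgraph.coeEmbeddingSpanningCoe⟩

theorem Walk.IsPath.append {u v w : V} {p : G.Walk u v} {q : G.Walk v w} (hp : p.IsPath)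
    (hq : q.IsPath) (hpq : ∀ y ∈ p.support, y ∈ q.support → y = v) : (p.append q).IsPath := by
  have hq' := hq.support_nodup
  rw [← q.cons_tail_support, List.nodup_cons] at hq'
  rw [isPath_def, support_append, List.nodup_append]
  refine ⟨hp.support_nodup, hq'.2, fun y hy z hz hyz => ?_⟩
  subst hyz
  exact hq'.1 (hpq y hy (List.mem_of_mem_tail hz) ▸ hz)

theorem Walk.exists_prefix_first_mem {u v : V} (p : G.Walk u v) {L : Set V} (hv : v ∈ L) :
    ∃ w ∈ L, ∃ r : G.Walk u w, r.edges ⊆ p.edges ∧ ∀ y ∈ r.support, y ∈ L → y = w := by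
  induction p with
  | nil => exact ⟨_, hv, nil, by simp, by simp⟩
  | @cons s t _ h q ih =>
    by_cases hs : s ∈ L
    · exact ⟨s, hs, nil, by simp, by simp⟩
    obtain ⟨w, hw, r, hrq, hrL⟩ := ih hv
    refine ⟨w, hw, cons h r, ?_, ?_⟩
    · simpa using List.cons_subset_cons _ hrq
    · intro y hy hyL
      rcases List.mem_cons.mp (support_cons h r ▸ hy) with rfl | hy
      · exact absurd hyL hs
      · exact hrL y hy hyL

theorem Walk.IsPath.isSteinerTree {u v : V} {p : G.Walk u v} (hp : p.IsPath) {S : Set V}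
    (hS : ∀ s ∈ S, s ∈ p.support) : G.IsSteinerTree S p.toSubgraph :=
  ⟨fun s hs => p.mem_verts_toSubgraph.mpr (hS s hs), hp.isTree_coe_toSubgraph⟩

theorem IsSteinerTree.edgeSet_nonempty {S : Set V} {T : G.Subgraph}
    (hT : G.IsSteinerTree S T) (hS : S.Nontrivial) : T.edgeSet.Nonempty := by
  obtain ⟨s, hs, t, ht, hst⟩ := hS
  obtain ⟨p⟩ := hT.2.connected ⟨s, hT.1 hs⟩ ⟨t, hT.1 ht⟩
  have hp : ¬ p.Nil := p.not_nil_of_ne fun h => hst (congrArg Subtype.val h)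
  exact ⟨_, Subgraph.mem_edgeSet.mpr (p.adj_snd hp)⟩

theorem bddAbove_steinerConn_set [Finite V] {S : Set V} (hS : S.Nontrivial) :
    BddAbove {n : ℕ | ∃ f : Fin n → G.Subgraph, (∀ i, G.IsSteinerTree S (f i)) ∧
      ∀ i j, i ≠ j → (f i).edgeSet ∩ (f j).edgeSet = ∅ ∧ (f i).verts ∩ (f j).verts = S} := by
  refine ⟨Nat.card (Sym2 V), ?_⟩
  rintro n ⟨f, hf, hdisj⟩
  choose e he using fun i => (hf i).edgeSet_nonempty hS
  have he_inj : Function.Injective e := fun i j hij => by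
    by_contra hne
    exact (hdisj i j hne).1.subset ⟨he i, hij ▸ he j⟩
  simpa using Nat.card_le_card_of_injective e he_inj

theorem two_le_steinerConn [Finite V] {S : Set V} (hS : S.Nontrivial) {T₁ T₂ : G.Subgraph}
    (h₁ : G.IsSteinerTree S T₁) (h₂ : G.IsSteinerTree S T₂)
    (he : T₁.edgeSet ∩ T₂.edgeSet = ∅) (hv : T₁.verts ∩ T₂.verts = S) :
    2 ≤ G.steinerConn S := by
  refine le_csSup (bddAbove_steinerConn_set hS) ⟨![T₁, T₂], fun i => ?_, fun i j hij => ?_⟩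
  · fin_cases i <;> assumption
  · fin_cases i <;> fin_cases j <;> simp_all [Set.inter_comm]

theorem steinerConn_le_kappaBar [Finite V] (S : Finset V) :
    G.steinerConn S ≤ G.kappaBar S.card := by
  refine le_csSup ((Set.finite_range fun S' : Finset V => G.steinerConn S').subset ?_).bddAbove
    ⟨S, rfl, rfl⟩
  rintro _ ⟨S', -, rfl⟩
  exact ⟨S', rfl⟩

theorem exists_card_eq_of_kappaBar_ne_zero {k : ℕ} (hk : G.kappaBar k ≠ 0) :
    ∃ S : Finset V, S.card = k := by
  contrapose! hk
  simp [kappaBar, hk]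

theorem two_le_kappaBar_three_of_isPath [Finite V] {a b c u₁ v₁ u₂ v₂ : V}
    (hab : a ≠ b) (hac : a ≠ c) (hbc : b ≠ c) {p : G.Walk u₁ v₁} {q : G.Walk u₂ v₂}
    (hp : p.IsPath) (hq : q.IsPath)
    (hpq : ∀ y, y ∈ p.support ∧ y ∈ q.support ↔ y = a ∨ y = b ∨ y = c)
    (he : p.edges.Disjoint q.edges) : 2 ≤ G.kappaBar 3 := by
  classical
  have hS : ({a, b, c} : Finset V).card = 3 :=
    Finset.card_eq_three.mpr ⟨a, b, c, hab, hac, hbc, rfl⟩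
  refine le_trans ?_ (hS ▸ steinerConn_le_kappaBar {a, b, c})
  refine two_le_steinerConn (T₁ := p.toSubgraph) (T₂ := q.toSubgraph) ?_
    (hp.isSteinerTree fun y hy => ((hpq y).mpr (by simpa using hy)).1)
    (hq.isSteinerTree fun y hy => ((hpq y).mpr (by simpa using hy)).2) ?_ ?_
  · exact ⟨a, by simp, b, by simp, hab⟩
  · simpa [Set.eq_empty_iff_forall_notMem] using fun e h₁ h₂ => he h₁ h₂
  · ext y
    simpa using hpq y

theorem two_le_kappaBar_three_of_isCycle_of_isPath [Finite V] {v w : V} {c : G.Walk v v}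
    (hc : c.IsCycle) {P : G.Walk v w} (hP : P.IsPath) (hwc : w ∈ c.support) (hwv : w ≠ v)
    (hPc : ∀ y ∈ P.support, y ∈ c.support → y = v ∨ y = w)
    (hPe : P.edges.Disjoint c.edges) : 2 ≤ G.kappaBar 3 := by
  wlog hw : c.snd ≠ w generalizing c
  · refine this hc.reverse (by simpa using hwc) (by simpa using hPc) (by simpa using hPe) ?_
    rw [snd_reverse, ← not_not.mp hw]
    exact hc.snd_ne_penultimate.symm
  obtain ⟨a, h, t, rfl⟩ := not_nil_iff.mp hc.not_nil
  rw [snd_cons] at hw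
  rw [cons_isCycle_iff] at hc
  have haP : a ∉ P.support := fun ha =>
    (hPc a ha (by simp)).elim (h.ne.symm ·) hw
  -- Trees for `{a, v, w}`: the edge `a v` followed by `P`, and `c` with the edge `v a` removed.
  refine two_le_kappaBar_three_of_isPath h.ne.symm hw (Ne.symm hwv)
    (p := cons h.symm P) (q := t) (by simp [cons_isPath_iff, hP, haP]) hc.1 (fun y => ?_) ?_
  · simp only [support_cons, List.mem_cons]
    constructor
    · rintro ⟨rfl | hyP, hyt⟩
      · exact .inl rfl
      · exact .inr (hPc y hyP (by simp [hyt]))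
    · rintro (rfl | rfl | rfl)
      · exact ⟨.inl rfl, t.start_mem_support⟩
      · exact ⟨.inr P.start_mem_support, t.end_mem_support⟩
      · exact ⟨.inr P.end_mem_support, by simpa [hwv] using hwc⟩
  · rw [edges_cons, List.disjoint_cons_left, Sym2.eq_swap]
    exact ⟨hc.2, List.disjoint_of_subset_right (by simp) hPe⟩

theorem two_le_kappaBar_three_of_isCycle_of_isCycle [Finite V] {v : V} {c d : G.Walk v v}
    (hc : c.IsCycle) (hd : d.IsCycle) (hcd : ∀ y ∈ c.support, y ∈ d.support → y = v) :
    2 ≤ G.kappaBar 3 := by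
  obtain ⟨a, h, t, rfl⟩ := not_nil_iff.mp hc.not_nil
  obtain ⟨b, h', t', rfl⟩ := not_nil_iff.mp hd.not_nil
  rw [cons_isCycle_iff] at hc hd
  -- Trees for `{a, v, b}`: the path `a v b`, and both cycles with their first edges removed.
  have hab : a ≠ b := fun hab => h.ne (hcd a (by simp) (by simp [hab])).symm
  refine two_le_kappaBar_three_of_isPath h.ne.symm hab h'.ne
    (p := cons h.symm (cons h' nil)) (q := t.append t'.reverse) ?_ ?_ (fun y => ?_) ?_
  · simp [cons_isPath_iff, h.ne.symm, hab, h'.ne]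
  · refine hc.1.append hd.1.reverse fun y hy hy' => hcd y (by simp [hy]) ?_
    simp only [support_reverse, List.mem_reverse] at hy'
    simp [hy']
  · simp only [support_cons, support_nil, List.mem_cons, List.not_mem_nil, or_false]
    refine ⟨And.left, fun hy => ⟨hy, ?_⟩⟩
    rcases hy with rfl | rfl | rfl
    · exact start_mem_support _
    · exact (mem_support_append_iff _ _).mpr (.inl t.end_mem_support)
    · exact end_mem_support _
  · intro e he₁ he₂
    simp only [edges_cons, edges_nil, List.mem_cons, List.not_mem_nil, or_false] at he₁
    rw [edges_append, edges_reverse, List.mem_append, List.mem_reverse] at he₂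
    rcases he₁ with rfl | rfl <;> rcases he₂ with he | he
    · exact hc.2 (Sym2.eq_swap ▸ he)
    · exact h.ne (hcd a (by simp) (by simp [t'.fst_mem_support_of_mem_edges he])).symm
    · exact h'.ne (hcd b (by simp [t.snd_mem_support_of_mem_edges he]) (by simp)).symm
    · exact hd.2 he

theorem mem_edges_of_isCycle_of_adj [Finite V] (hb : ∀ e, ¬ G.IsBridge e)
    (hκ : G.kappaBar 3 ≤ 1) {v x : V} {c : G.Walk v v} (hc : c.IsCycle) (hvx : G.Adj v x) :
    s(v, x) ∈ c.edges := by
  classical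
  by_contra hvc
  have hκ' : ¬ 2 ≤ G.kappaBar 3 := by omega
  obtain ⟨q, hq⟩ : ∃ q : G.Walk v x, s(v, x) ∉ q.edges := by
    simpa [isBridge_iff_forall_walk_mem_edges] using hb s(v, x)
  obtain ⟨w, hwc, r, hrq, hrc⟩ :=
    q.reverse.exists_prefix_first_mem (L := {y | y ∈ c.support}) c.start_mem_support
  have hR : r.bypass.IsPath := r.bypass_isPath
  have hRv : s(v, x) ∉ r.bypass.edges := fun h =>
    hq (by simpa using hrq (r.edges_bypass_subset_edges h))
  have hRc : ∀ y ∈ r.bypass.support, y ∈ c.support → y = w :=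
    fun y hy => hrc y (r.support_bypass_subset_support hy)
  by_cases hwv : w = v
  · subst hwv
    refine hκ' (two_le_kappaBar_three_of_isCycle_of_isCycle hc
      ((cons_isCycle_iff _ hvx).mpr ⟨hR, hRv⟩) fun y hyc hyd => ?_)
    rcases List.mem_cons.mp (support_cons _ _ ▸ hyd) with rfl | hy
    · rfl
    · exact hRc y hy hyc
  · refine hκ' (two_le_kappaBar_three_of_isCycle_of_isPath hc (P := cons hvx r.bypass) ?_ hwc hwv
      (fun y hyP hyc => ?_) fun e he hec => ?_)
    · exact (cons_isPath_iff _ _).mpr ⟨hR, fun hv => hwv (hRc v hv c.start_mem_support).symm⟩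
    · rcases List.mem_cons.mp (support_cons _ _ ▸ hyP) with rfl | hy
      · exact .inl rfl
      · exact .inr (hRc y hy hyc)
    · rcases List.mem_cons.mp (edges_cons _ _ ▸ he) with rfl | he
      · exact hvc hec
      · induction e using Sym2.ind with | _ y z => ?_
        have hy := hRc y (fst_mem_support_of_mem_edges _ he) (fst_mem_support_of_mem_edges _ hec)
        have hz := hRc z (snd_mem_support_of_mem_edges _ he) (snd_mem_support_of_mem_edges _ hec)
        exact (hy ▸ hz ▸ adj_of_mem_edges _ he).ne rfl

end SimpleGraph

/-- A connected graph with `κ̄₃(G) = 1` and no cut edge is a cycle. -/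
theorem stmt_4 {V : Type*} [Fintype V] (G : SimpleGraph V) (hG : G.Connected)
    (hk : G.kappaBar 3 = 1) (hbridge : ∀ e : Sym2 V, ¬ G.IsBridge e) :
    ∃ (x : V) (c : G.Walk x x), c.IsCycle ∧ (∀ v : V, v ∈ c.support) ∧
      G.edgeSet = {e | e ∈ c.edges} := by
  classical
  obtain ⟨S, hS⟩ := exists_card_eq_of_kappaBar_ne_zero (hk ▸ one_ne_zero)
  have : Nontrivial V := Fintype.one_lt_card_iff_nontrivial.mp (by have := S.card_le_univ; omega)
  obtain ⟨u, b, hub⟩ : ∃ u b, G.Adj u b :=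
    ⟨_, hG.preconnected.exists_adj_of_nontrivial (Classical.arbitrary V)⟩
  obtain ⟨x, c, hc, -⟩ :=
    adj_and_reachable_delete_edges_iff_exists_cycle.mp ⟨hub, not_not.mp (hbridge s(u, b))⟩
  have hedges : ∀ y ∈ c.support, ∀ z, G.Adj y z → s(y, z) ∈ c.edges := fun y hy z hyz =>
    (c.rotate_edges y hy).mem_iff.mp
      (mem_edges_of_isCycle_of_adj hbridge hk.le (hc.rotate hy) hyz)
  have hsupp : ∀ y, y ∈ c.support := by
    intro y
    by_contra hy
    obtain ⟨⟨⟨y₁, y₂⟩, hadj⟩, -, hy₁, hy₂⟩ := (hG.preconnected x y).some.exists_boundary_dart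
      {y | y ∈ c.support} c.start_mem_support hy
    exact hy₂ (c.snd_mem_support_of_mem_edges (hedges y₁ hy₁ y₂ hadj))
  refine ⟨x, c, hc, hsupp, Set.ext fun e => ⟨fun he => ?_, fun he => c.edges_subset_edgeSet he⟩⟩
  induction e using Sym2.ind with | _ y z => exact hedges y (hsupp y) z he
end

section
/- Let G be a connected graph with 6 vertices and exactly 7 edges. Then κ̄₄(G) = 1. -/
open SimpleGraph

/-!
Two edge-disjoint trees `T₁, T₂` have `|V(T₁)| + |V(T₂)| - 2 = |V(T₁) ∪ V(T₂)| + |V(T₁) ∩ V(T₂)| - 2`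
edges, and in a connected graph the vertices outside both trees meet at least as many further
edges as there are such vertices. Hence two internally disjoint `S`-Steiner trees force
`|E(G)| ≥ |V(G)| + |S| - 2`, that is `8 > 7` here, while a spanning tree gives `κ(S) ≥ 1`.
-/

namespace SimpleGraph

variable {V : Type*} {G : SimpleGraph V}

theorem Subgraph.ncard_edgeSet_add_one_of_isTree [Finite V] {T : G.Subgraph}
    (hT : T.coe.IsTree) : T.edgeSet.ncard + 1 = T.verts.ncard := by
  have hcount := (isTree_iff_connected_and_card.mp hT).2
  rw [Nat.card_coe_set_eq, Nat.card_coe_set_eq] at hcount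
  rwa [← T.image_coe_edgeSet_coe,
    Set.ncard_image_of_injective _ (Sym2.map.injective Subtype.coe_injective)]

theorem Connected.ncard_le_ncard_iUnion_incidenceSet [Finite V] (hG : G.Connected) {W : Set V}
    (hW : Wᶜ.Nonempty) : W.ncard ≤ (⋃ w ∈ W, G.incidenceSet w).ncard := by
  obtain ⟨x, hx⟩ := hW
  induction hn : W.ncard generalizing W with
  | zero => exact Nat.zero_le _
  | succ n ih =>
    obtain ⟨w, hw⟩ : W.Nonempty := Set.nonempty_of_ncard_ne_zero (by omega)
    obtain ⟨p⟩ := hG.preconnected w x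
    obtain ⟨d, -, hd₁, hd₂⟩ := p.exists_boundary_dart W hw hx
    have hsmaller := ih (W := W \ {d.fst}) (fun h => hx h.1)
      (by rw [Set.ncard_sdiff_singleton_of_mem hd₁]; omega)
    have hnew : d.edge ∉ ⋃ w ∈ W \ {d.fst}, G.incidenceSet w := by
      simp only [Set.mem_iUnion, not_exists]
      rintro v ⟨hvW, hvd⟩ hv
      rcases Sym2.mem_iff.mp hv.2 with rfl | rfl
      · exact hvd rfl
      · exact hd₂ hvW
    have hsub : insert d.edge (⋃ w ∈ W \ {d.fst}, G.incidenceSet w) ⊆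
        ⋃ w ∈ W, G.incidenceSet w := by
      refine Set.insert_subset (Set.mem_biUnion hd₁ ⟨d.edge_mem, Sym2.mem_mk_left _ _⟩) ?_
      exact Set.biUnion_subset_biUnion_left Set.sdiff_subset
    calc n + 1 ≤ (insert d.edge (⋃ w ∈ W \ {d.fst}, G.incidenceSet w)).ncard := by
          rw [Set.ncard_insert_of_notMem hnew]; omega
      _ ≤ _ := Set.ncard_le_ncard hsub

theorem Connected.card_add_ncard_inter_le_of_isTree [Finite V] (hG : G.Connected)
    {T₁ T₂ : G.Subgraph} (h₁ : T₁.coe.IsTree) (h₂ : T₂.coe.IsTree)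
    (hE : Disjoint T₁.edgeSet T₂.edgeSet) :
    Nat.card V + (T₁.verts ∩ T₂.verts).ncard ≤ G.edgeSet.ncard + 2 := by
  set U := T₁.verts ∪ T₂.verts
  set X := ⋃ w ∈ Uᶜ, G.incidenceSet w
  have hU : U.Nonempty := h₁.connected.nonempty.elim fun v => ⟨v, Or.inl v.2⟩
  have hX : Uᶜ.ncard ≤ X.ncard := hG.ncard_le_ncard_iUnion_incidenceSet (by rwa [compl_compl])
  have hdisj : ∀ T : G.Subgraph, T.verts ⊆ U → Disjoint T.edgeSet X := by
    refine fun T hT => Set.disjoint_left.mpr fun e he heX => ?_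
    obtain ⟨w, hw, -, hwe⟩ := Set.mem_iUnion₂.mp heX
    exact hw (hT (T.mem_verts_of_mem_edge he hwe))
  have hEX : (T₁.edgeSet ∪ T₂.edgeSet ∪ X).ncard =
      T₁.edgeSet.ncard + T₂.edgeSet.ncard + X.ncard := by
    rw [Set.ncard_union_eq (Set.disjoint_union_left.mpr
        ⟨hdisj T₁ Set.subset_union_left, hdisj T₂ Set.subset_union_right⟩),
      Set.ncard_union_eq hE]
  have hsub : T₁.edgeSet ∪ T₂.edgeSet ∪ X ⊆ G.edgeSet :=
    Set.union_subset (Set.union_subset T₁.edgeSet_subset T₂.edgeSet_subset)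
      (Set.iUnion₂_subset fun w _ => Set.inter_subset_left)
  have hG_edges := Set.ncard_le_ncard hsub
  have hV : U.ncard + _ = _ := Set.ncard_union_add_ncard_inter T₁.verts T₂.verts
  have hUc := Set.ncard_add_ncard_compl U
  have c₁ := Subgraph.ncard_edgeSet_add_one_of_isTree h₁
  have c₂ := Subgraph.ncard_edgeSet_add_one_of_isTree h₂
  omega

theorem Connected.exists_isSteinerTree (hG : G.Connected) (S : Set V) :
    ∃ T, G.IsSteinerTree S T := by
  obtain ⟨T, hle, hT⟩ := hG.exists_isTree_le
  let T' := toSubgraph T hle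
  exact ⟨T', Set.subset_univ S,
    (Iso.isTree_iff (T'.spanningCoeEquivCoeOfSpanning (toSubgraph.isSpanning T hle))).mp hT⟩

theorem Connected.steinerConn_eq_one [Finite V] (hG : G.Connected) {S : Set V}
    (hS : G.edgeSet.ncard + 2 < Nat.card V + S.ncard) : G.steinerConn S = 1 := by
  refine IsGreatest.csSup_eq ⟨?_, ?_⟩
  · obtain ⟨T, hT⟩ := hG.exists_isSteinerTree S
    exact ⟨fun _ => T, fun _ => hT, fun i j hij => absurd (Subsingleton.elim i j) hij⟩
  · rintro n ⟨f, hf, hdisj⟩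
    by_contra! hn
    obtain ⟨hE, hV⟩ := hdisj ⟨0, by omega⟩ ⟨1, hn⟩ (by simp)
    have := hG.card_add_ncard_inter_le_of_isTree (hf _).2 (hf _).2
      (Set.disjoint_iff_inter_eq_empty.mpr hE)
    rw [hV] at this
    omega

theorem kappaBar_eq_of_forall_steinerConn_eq {k m : ℕ} (hk : ∃ S : Finset V, S.card = k)
    (h : ∀ S : Finset V, S.card = k → G.steinerConn S = m) : G.kappaBar k = m := by
  have hset : {n | ∃ S : Finset V, S.card = k ∧ G.steinerConn S = n} = {m} := by
    ext n
    refine ⟨fun ⟨S, hS, hn⟩ => hn ▸ h S hS, ?_⟩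
    rintro rfl
    obtain ⟨S, hS⟩ := hk
    exact ⟨S, hS, h S hS⟩
  rw [kappaBar, hset, csSup_singleton]

end SimpleGraph

/-- A connected graph with 6 vertices and exactly 7 edges has `κ̄₄(G) = 1`. -/
theorem stmt_9 {V : Type*} [Fintype V] (G : SimpleGraph V) (hG : G.Connected)
    (hcard : Fintype.card V = 6) (he : G.edgeSet.ncard = 7) :
    G.kappaBar 4 = 1 := by
  obtain ⟨S, -, hS⟩ := Finset.exists_subset_card_eq (s := (Finset.univ : Finset V)) (n := 4)
    (by simp [hcard])
  refine kappaBar_eq_of_forall_steinerConn_eq ⟨S, hS⟩ fun S hS => hG.steinerConn_eq_one ?_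
  rw [he, Nat.card_eq_fintype_card, hcard, Set.ncard_coe_finset, hS]
  norm_num
end
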